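/- arXiv:math/0403533 — 7 statements merged into one kernel-verified Lean document; each statement's English description precedes it below -/
import Mathlib

section
/- If the measures μ_1,...,μ_r form a weakly complete system, then the monic type II multiple orthogonal polynomials with proper multi-indices satisfy a recurrence relation of order r+1: x P_n(x) = P_{n+1}(x) + Σ_{j=0}^{r} a_{n,j} P_{n−j}(x) for n ≥ 0, with P_0 ≡ 1 and P_j ≡ 0 for j = −1,...,−r, for some complex coefficients a_{n,j}. -/
/-!
Since `X P_n - P_{n+1}` has degree at most `n`, subtracting a suitable combination of
`P_{n-r}, …, P_n` leaves a remainder `R` of degree `< n - r`. Each component of `ν_n` exceeds that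
of `ν_{n-r}` by one and the proper indices grow with `n`, so `R` satisfies the type II conditions
for `ν_{n-r}`; by normality of `ν_{n-r}`, such a polynomial of degree `< n - r` vanishes.
-/

open Polynomial

/-- The `j`-th entry of the proper multi-index `ν_n`. -/
def properIndex (r n : ℕ) (j : Fin r) : ℕ := (n + r - 1 - j.val) / r

/-- Type II orthogonality conditions (measures identified with moment functionals). -/
def TypeIISol (r : ℕ) (μ : Fin r → (Polynomial ℂ →ₗ[ℂ] ℂ)) (n : ℕ) (P : Polynomial ℂ) : Prop :=
  P.degree ≤ (n : WithBot ℕ) ∧ ∀ j : Fin r, ∀ ℓ < properIndex r n j, μ j (X ^ ℓ * P) = 0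

/-- The proper multi-index `ν_n` is normal. -/
def NormalIndex (r : ℕ) (μ : Fin r → (Polynomial ℂ →ₗ[ℂ] ℂ)) (n : ℕ) : Prop :=
  (∀ P, TypeIISol r μ n P → P = 0 ∨ P.natDegree = n) ∧
  (∀ P Q, TypeIISol r μ n P → TypeIISol r μ n Q → P ≠ 0 → ∃ c : ℂ, Q = c • P)

/-- Weakly complete system: all proper multi-indices are normal. -/
def WeaklyComplete (r : ℕ) (μ : Fin r → (Polynomial ℂ →ₗ[ℂ] ℂ)) : Prop :=
  ∀ n, NormalIndex r μ n

theorem properIndex_mono {r : ℕ} (j : Fin r) {m n : ℕ} (h : m ≤ n) :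
    properIndex r m j ≤ properIndex r n j :=
  Nat.div_le_div_right (by omega)

theorem succ_lt_properIndex_of_lt_properIndex_sub {r n ℓ : ℕ} {j : Fin r}
    (h : ℓ < properIndex r (n - r) j) : ℓ + 1 < properIndex r n j := by
  have hj := j.isLt
  unfold properIndex at *
  rw [← Nat.add_one_le_iff, Nat.le_div_iff_mul_le j.pos] at *
  have hr : r ≤ (ℓ + 1) * r := Nat.le_mul_of_pos_left r ℓ.succ_pos
  rw [add_one_mul (ℓ + 1)]
  generalize (ℓ + 1) * r = t at *
  omega

theorem NormalIndex.eq_zero_of_degree_lt {r : ℕ} {μ : Fin r → (ℂ[X] →ₗ[ℂ] ℂ)} {m : ℕ}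
    {Q : ℂ[X]} (hm : NormalIndex r μ m) (hQ : ∀ j, ∀ ℓ < properIndex r m j, μ j (X ^ ℓ * Q) = 0)
    (hdeg : Q.degree < m) : Q = 0 := by
  rcases hm.1 Q ⟨hdeg.le, hQ⟩ with hQ0 | hQm
  · exact hQ0
  by_contra hQ0
  rw [degree_eq_natDegree hQ0, hQm] at hdeg
  exact lt_irrefl _ hdeg

theorem degree_sub_coeff_smul_lt {R : Type*} [Ring R] {Q p : R[X]} {N : ℕ} (hp : p.Monic)
    (hpN : p.natDegree = N) (hQ : Q.degree < (N + 1 : ℕ)) :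
    (Q - Q.coeff N • p).degree < N := by
  rw [degree_lt_iff_coeff_zero]
  intro m hm
  rcases hm.eq_or_lt with rfl | hlt
  · simp [← hpN, hp.coeff_natDegree]
  · have hQm : Q.coeff m = 0 := coeff_eq_zero_of_degree_lt (hQ.trans_le (by exact_mod_cast hlt))
    have hpm : p.coeff m = 0 := coeff_eq_zero_of_natDegree_lt (hpN ▸ hlt)
    simp [hQm, hpm]

theorem exists_degree_sub_sum_Ico_lt {R : Type*} [Ring R] {P : ℕ → R[X]}
    (hmonic : ∀ n, (P n).Monic) (hdeg : ∀ n, (P n).natDegree = n) (m : ℕ) {N : ℕ} {Q : R[X]}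
    (hQ : Q.degree < N) : ∃ c : ℕ → R, (Q - ∑ k ∈ Finset.Ico m N, c k • P k).degree < m := by
  induction N generalizing Q with
  | zero => exact ⟨0, by simpa using hQ.trans_le (by exact_mod_cast m.zero_le)⟩
  | succ N ih =>
    rcases lt_or_ge N m with hNm | hmN
    · refine ⟨0, ?_⟩
      simpa [Finset.Ico_eq_empty_of_le (show N + 1 ≤ m from hNm)] using
        hQ.trans_le (by exact_mod_cast hNm)
    obtain ⟨c, hc⟩ := ih (degree_sub_coeff_smul_lt (hmonic N) (hdeg N) hQ)
    refine ⟨Function.update c N (Q.coeff N), ?_⟩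
    rw [Finset.sum_Ico_succ_top hmN, Function.update_self,
      Finset.sum_congr rfl fun k hk => by rw [Function.update_of_ne (Finset.mem_Ico.1 hk).2.ne]]
    rwa [sub_add_eq_sub_sub_swap]

theorem degree_X_mul_sub_lt {R : Type*} [Ring R] [Nontrivial R] {p q : R[X]} {n : ℕ}
    (hp : p.Monic) (hq : q.Monic) (hpn : p.natDegree = n) (hqn : q.natDegree = n + 1) :
    (X * p - q).degree < ((n + 1 : ℕ) : WithBot ℕ) := by
  have hXp : (X * p).Monic := monic_X.mul hp
  have hXpn : (X * p).natDegree = n + 1 := by rw [natDegree_X_mul hp.ne_zero, hpn]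
  rw [← hXpn, ← degree_eq_natDegree hXp.ne_zero]
  have hdeg_eq : (X * p).degree = q.degree := by
    rw [degree_eq_natDegree hXp.ne_zero, degree_eq_natDegree hq.ne_zero, hXpn, hqn]
  exact degree_sub_lt_left hdeg_eq hXp.ne_zero (by rw [hXp.leadingCoeff, hq.leadingCoeff])

theorem sum_Ico_sub_eq_sum_range {M : Type*} [AddCommMonoid M] (f : ℕ → M) (n r : ℕ) :
    ∑ k ∈ Finset.Ico (n - r) (n + 1), f k =
      ∑ j ∈ Finset.range (r + 1), if j ≤ n then f (n - j) else 0 := by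
  rw [← Finset.sum_filter]
  refine Finset.sum_nbij' (fun k => n - k) (fun j => n - j) ?_ ?_ ?_ ?_ ?_ <;>
    intro i hi <;>
    simp only [Finset.mem_Ico, Finset.mem_filter, Finset.mem_range] at hi ⊢
  all_goals first | omega | (congr 1; omega)

theorem exists_recurrence_coeff {r : ℕ} {μ : Fin r → (ℂ[X] →ₗ[ℂ] ℂ)} {P : ℕ → ℂ[X]}
    (hmonic : ∀ n, (P n).Monic) (hdeg : ∀ n, (P n).natDegree = n)
    (horth : ∀ n, TypeIISol r μ n (P n)) {n : ℕ} (hnormal : NormalIndex r μ (n - r)) :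
    ∃ b : ℕ → ℂ, X * P n = P (n + 1) +
      ∑ j ∈ Finset.range (r + 1), b j • (if j ≤ n then P (n - j) else 0) := by
  obtain ⟨c, hc⟩ := exists_degree_sub_sum_Ico_lt hmonic hdeg (n - r)
    (degree_X_mul_sub_lt (hmonic n) (hmonic (n + 1)) (hdeg n) (hdeg (n + 1)))
  set R := X * P n - P (n + 1) - ∑ k ∈ Finset.Ico (n - r) (n + 1), c k • P k
  have hR_orth : ∀ j, ∀ ℓ < properIndex r (n - r) j, μ j (X ^ ℓ * R) = 0 := by
    intro j ℓ hℓ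
    have hPn : μ j (X ^ (ℓ + 1) * P n) = 0 :=
      (horth n).2 j _ (succ_lt_properIndex_of_lt_properIndex_sub hℓ)
    have hPsucc : μ j (X ^ ℓ * P (n + 1)) = 0 :=
      (horth _).2 j ℓ (hℓ.trans_le (properIndex_mono j (by omega)))
    have hPk : ∀ k ∈ Finset.Ico (n - r) (n + 1), μ j (X ^ ℓ * (c k • P k)) = 0 := fun k hk => by
      rw [mul_smul_comm, map_smul,
        (horth k).2 j ℓ (hℓ.trans_le (properIndex_mono j (Finset.mem_Ico.1 hk).1)), smul_zero]
    simp only [R, mul_sub, Finset.mul_sum, map_sub, map_sum, ← mul_assoc, ← pow_succ, hPn,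
      hPsucc, Finset.sum_eq_zero hPk, sub_zero]
  have hR : R = 0 := hnormal.eq_zero_of_degree_lt hR_orth hc
  refine ⟨fun j => c (n - j), ?_⟩
  simp only [smul_ite, smul_zero]
  rw [← sum_Ico_sub_eq_sum_range (fun k => c k • P k)]
  linear_combination hR

theorem typeII_recurrence_general (r : ℕ)
    (μ : Fin r → (Polynomial ℂ →ₗ[ℂ] ℂ)) (hwc : WeaklyComplete r μ)
    (P : ℕ → Polynomial ℂ)
    (hmonic : ∀ n, (P n).Monic) (hdeg : ∀ n, (P n).natDegree = n)
    (horth : ∀ n, TypeIISol r μ n (P n)) :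
    ∃ a : ℕ → ℕ → ℂ, ∀ n,
      X * P n = P (n + 1) +
        ∑ j ∈ Finset.range (r + 1), a n j • (if j ≤ n then P (n - j) else 0) := by
  choose a ha using fun n => exists_recurrence_coeff hmonic hdeg horth (hwc (n - r))
  exact ⟨a, ha⟩

/-- for a weakly complete system, the monic type II multiple orthogonal
polynomials satisfy a recurrence relation of order `r+1`:
`x P_n = P_{n+1} + ∑_{j=0}^{r} a_{n,j} P_{n-j}`, with the convention `P_{n-j} = 0` for `j > n`
(so `P_0 ≡ 1` and `P_{-1} = ⋯ = P_{-r} ≡ 0`). -/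
theorem typeII_recurrence (r : ℕ) (hr : 0 < r)
    (μ : Fin r → (Polynomial ℂ →ₗ[ℂ] ℂ)) (hwc : WeaklyComplete r μ)
    (P : ℕ → Polynomial ℂ)
    (hmonic : ∀ n, (P n).Monic) (hdeg : ∀ n, (P n).natDegree = n)
    (horth : ∀ n, TypeIISol r μ n (P n)) :
    ∃ a : ℕ → ℕ → ℂ, ∀ n,
      X * P n = P (n + 1) +
        ∑ j ∈ Finset.range (r + 1), a n j • (if j ≤ n then P (n - j) else 0) :=
  typeII_recurrence_general r μ hwc P hmonic hdeg horth
end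

section
/- Writing n = mr + s with 0 < s ≤ r and m ≥ 0, the s-th component of the type I vector polynomial satisfies A_{mr+s,s}(x) = (A_{s,s} / ∏_{i=1}^{m} a_{ir+s−1,r}) x^m + O(x^{m−1}); in particular A_{mr+s,s} has exact degree m and its leading coefficient is A_{s,s} / ∏_{i=1}^{m} a_{ir+s−1,r}. -/
open Polynomial

/-!
Fix a component and read the recurrence at `n` as an expression for `a_{n+r-1,r} A_{n+r}` in
terms of `x A_n`, `A_{n-1}` and `A_n, …, A_{n+r-1}`. Since `a_{ℓ,r} ≠ 0`, induction shows that
the `d`-th coefficient of the `(k+1)`-st component of `A_n` vanishes as soon as `n ≤ d r + k`.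
In the coefficient of `x^{m+1}` of the recurrence at `n = m r + k + 1` every term but the one
coming from `x A_n` then vanishes, which gives the leading coefficient recursively in `m`.
-/

namespace Polynomial

def IsTypeIRecurrence {K : Type*} [Field K] (r : ℕ) (a : ℕ → ℕ → K) (P : ℕ → K[X]) : Prop :=
  ∀ n, 1 ≤ n → X * P n = P (n - 1) + ∑ j ∈ Finset.range (r + 1), a (n + j - 1) j • P (n + j)

namespace IsTypeIRecurrence

variable {K : Type*} [Field K] {r k : ℕ} {a : ℕ → ℕ → K} {P : ℕ → K[X]}

theorem coeff_top (h : IsTypeIRecurrence r a P) {n : ℕ} (hn : 1 ≤ n) (d : ℕ) :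
    a (n + r - 1) r * (P (n + r)).coeff d =
      (X * P n).coeff d - (P (n - 1)).coeff d -
        ∑ j ∈ Finset.range r, a (n + j - 1) j * (P (n + j)).coeff d := by
  have hd := congrArg (coeff · d) (h n hn)
  simp only [Finset.sum_range_succ, coeff_add, finsetSum_coeff, coeff_smul, smul_eq_mul] at hd
  linear_combination -hd

theorem coeff_eq_zero_of_le (h : IsTypeIRecurrence r a P) (hr : 0 < r)
    (har : ∀ ℓ, r ≤ ℓ → a ℓ r ≠ 0) (hzero : ∀ n ≤ k, P n = 0)
    (hconst : ∀ n ≤ r, (P n).degree ≤ 0) :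
    ∀ n d, n ≤ d * r + k → (P n).coeff d = 0 := by
  intro n
  induction n using Nat.strong_induction_on with
  | _ n ih =>
  intro d hnd
  rcases le_or_gt n r with hnr | hrn
  · cases d with
    | zero => simp [hzero n (by omega)]
    | succ d =>
      exact coeff_eq_zero_of_degree_lt ((hconst n hnr).trans_lt (by exact_mod_cast d.succ_pos))
  · obtain ⟨n, rfl⟩ : ∃ n', n = n' + r := ⟨n - r, by omega⟩
    have hX : (X * P n).coeff d = 0 := by
      cases d with
      | zero => exact coeff_X_mul_zero _
      | succ d => rw [coeff_X_mul]; exact ih n (by omega) d (by rw [add_one_mul] at hnd; omega)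
    have key := h.coeff_top (n := n) (by omega) d
    rw [hX, ih (n - 1) (by omega) d (by omega),
      Finset.sum_eq_zero fun j hj => by
        have := Finset.mem_range.mp hj
        rw [ih (n + j) (by omega) d (by omega), mul_zero],
      sub_zero, sub_zero] at key
    exact (mul_eq_zero.mp key).resolve_left (har _ (by omega))

theorem coeff_mul_add_add_one (h : IsTypeIRecurrence r a P) (hr : 0 < r)
    (har : ∀ ℓ, r ≤ ℓ → a ℓ r ≠ 0) (hzero : ∀ n ≤ k, P n = 0)
    (hconst : ∀ n ≤ r, (P n).degree ≤ 0)
    (m : ℕ) :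
    (P (m * r + k + 1)).coeff m = (P (k + 1)).coeff 0 / ∏ i ∈ Finset.Icc 1 m, a (i * r + k) r := by
  induction m with
  | zero => simp
  | succ m ih =>
    have hvanish := h.coeff_eq_zero_of_le hr har hzero hconst
    have key := h.coeff_top (n := m * r + k + 1) (by omega) (m + 1)
    have hidx : m * r + k + 1 + r = (m + 1) * r + k + 1 := by ring
    rw [coeff_X_mul, ih, hvanish (m * r + k + 1 - 1) (m + 1) (by rw [add_one_mul]; omega),
      Finset.sum_eq_zero fun j hj => by
        have := Finset.mem_range.mp hj
        rw [hvanish _ (m + 1) (by rw [add_one_mul]; omega), mul_zero],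
      sub_zero, sub_zero, hidx, Nat.add_sub_cancel] at key
    rw [Finset.prod_Icc_succ_top (by omega), ← div_div, eq_div_iff (har _ (by nlinarith)), ← key,
      mul_comm]

theorem natDegree_le (h : IsTypeIRecurrence r a P) (hr : 0 < r)
    (har : ∀ ℓ, r ≤ ℓ → a ℓ r ≠ 0) (hzero : ∀ n ≤ k, P n = 0)
    (hconst : ∀ n ≤ r, (P n).degree ≤ 0)
    (m : ℕ) : (P (m * r + k + 1)).natDegree ≤ m :=
  natDegree_le_iff_coeff_eq_zero.mpr fun d hd =>
    h.coeff_eq_zero_of_le hr har hzero hconst _ _ (by nlinarith)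

end IsTypeIRecurrence

end Polynomial

theorem typeI_component_leading_coeff_general (r : ℕ) (a : ℕ → ℕ → ℂ)
    (har : ∀ ℓ, r ≤ ℓ → a ℓ r ≠ 0)
    (A : ℕ → Fin r → Polynomial ℂ)
    (hA0 : ∀ k : Fin r, A 0 k = 0)
    (hAconst : ∀ i j : Fin r, (A (i.val + 1) j).degree ≤ 0)
    (hAtri : ∀ i j : Fin r, i.val < j.val → A (i.val + 1) j = 0)
    (hAdiag : ∀ j : Fin r, A (j.val + 1) j ≠ 0)
    (hArec : ∀ n, 1 ≤ n → ∀ k : Fin r,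
      X * A n k = A (n - 1) k +
        ∑ j ∈ Finset.range (r + 1), a (n + j - 1) j • A (n + j) k) :
    ∀ m : ℕ, ∀ sidx : Fin r,
      A (m * r + sidx.val + 1) sidx ≠ 0 ∧
      (A (m * r + sidx.val + 1) sidx).natDegree = m ∧
      (A (m * r + sidx.val + 1) sidx).leadingCoeff =
        (A (sidx.val + 1) sidx).coeff 0 / ∏ i ∈ Finset.Icc 1 m, a (i * r + sidx.val) r := by
  intro m k
  have hr : 0 < r := k.pos
  have hP : IsTypeIRecurrence r a (A · k) := fun n hn => hArec n hn k
  have hzero : ∀ n ≤ k.val, A n k = 0 := fun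
    | 0, _ => hA0 k
    | n + 1, hn => hAtri ⟨n, by omega⟩ k (by simp; omega)
  have hconst : ∀ n ≤ r, (A n k).degree ≤ 0 := fun
    | 0, _ => by simp [hA0]
    | n + 1, hn => hAconst ⟨n, by omega⟩ k
  have hlead := hP.coeff_mul_add_add_one hr har hzero hconst m
  have hdiag : (A (k.val + 1) k).coeff 0 ≠ 0 := fun h0 =>
    hAdiag k (by rw [eq_C_of_degree_le_zero (hAconst k k), h0, C_0])
  have hcoeff_ne : (A (m * r + k.val + 1) k).coeff m ≠ 0 := by
    rw [hlead]
    refine div_ne_zero hdiag (Finset.prod_ne_zero_iff.mpr fun i hi => har _ ?_)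
    nlinarith [(Finset.mem_Icc.mp hi).1]
  have hdeg :=
    natDegree_eq_of_le_of_coeff_ne_zero (hP.natDegree_le hr har hzero hconst m) hcoeff_ne
  exact ⟨fun h => hcoeff_ne (by simp [h]), hdeg, by rw [leadingCoeff, hdeg, hlead]⟩

/-- writing `n = m r + s` with `0 < s ≤ r` (here `s = sidx.val + 1` for
`sidx : Fin r`), the `s`-th component of the type I vector polynomial satisfies
`A_{mr+s,s}(x) = (A_{s,s} / ∏_{i=1}^{m} a_{ir+s−1,r}) x^m + O(x^{m−1})`; in particular
`A_{mr+s,s}` has exact degree `m` with that leading coefficient. -/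
theorem typeI_component_leading_coeff (r : ℕ) (hr : 0 < r) (a : ℕ → ℕ → ℂ)
    (hconv : ∀ ℓ1 ℓ2 : ℕ, ℓ1 < ℓ2 → ℓ2 ≤ r → a ℓ1 ℓ2 = 1)
    (har : ∀ ℓ, r ≤ ℓ → a ℓ r ≠ 0)
    (A : ℕ → Fin r → Polynomial ℂ)
    (hA0 : ∀ k : Fin r, A 0 k = 0)
    (hAconst : ∀ i j : Fin r, (A (i.val + 1) j).degree ≤ 0)
    (hAtri : ∀ i j : Fin r, i.val < j.val → A (i.val + 1) j = 0)
    (hAdiag : ∀ j : Fin r, A (j.val + 1) j ≠ 0)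
    (hArec : ∀ n, 1 ≤ n → ∀ k : Fin r,
      X * A n k = A (n - 1) k +
        ∑ j ∈ Finset.range (r + 1), a (n + j - 1) j • A (n + j) k) :
    ∀ m : ℕ, ∀ sidx : Fin r,
      A (m * r + sidx.val + 1) sidx ≠ 0 ∧
      (A (m * r + sidx.val + 1) sidx).natDegree = m ∧
      (A (m * r + sidx.val + 1) sidx).leadingCoeff =
        (A (sidx.val + 1) sidx).coeff 0 / ∏ i ∈ Finset.Icc 1 m, a (i * r + sidx.val) r :=
  typeI_component_leading_coeff_general r a har A hA0 hAconst hAtri hAdiag hArec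
end

section
/- Sharpness of multiple Gaussian quadrature: under the same hypotheses, the interpolatory quadrature rules with nodes at the zeros of P_n do not have vector order (n−1)e + ν_{n+1}; that is, there exists j and a polynomial h of degree ≤ n − 1 + ν_{n+1}(j) such that ∫ h dμ_j ≠ Σ_ℓ w^{(j)}_{ℓ,n} h(x_{ℓ,n}). -/
/-!
Normality of `ν_{n+1}` forbids the nonzero polynomial `P`, of degree `n < n + 1`, from
satisfying the type II conditions for `ν_{n+1}`, so `μ_j (x^ℓ P) ≠ 0` for some `j` and
`ℓ < ν_{n+1}(j)`. A rule with nodes at the zeros of `P` returns `0` on `x^ℓ P`, of degree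
`n + ℓ ≤ n - 1 + ν_{n+1}(j)`.
-/

open Polynomial

theorem NormalIndex.exists_moment_ne_zero {r m : ℕ} {μ : Fin r → (Polynomial ℂ →ₗ[ℂ] ℂ)}
    (hnormal : NormalIndex r μ m) {P : Polynomial ℂ} (hP : P ≠ 0) (hdeg : P.natDegree < m) :
    ∃ j : Fin r, ∃ ℓ < properIndex r m j, μ j (X ^ ℓ * P) ≠ 0 := by
  by_contra! horth
  have hsol : TypeIISol r μ m P :=
    ⟨degree_le_natDegree.trans (by exact_mod_cast hdeg.le), horth⟩
  rcases hnormal.1 P hsol with hzero | hdeg'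
  · exact hP hzero
  · omega

theorem Lagrange.sum_mul_eval_mul_nodal_eq_zero {R ι : Type*} [CommRing R]
    (s : Finset ι) (x : ι → R) (w : ι → R) (q : R[X]) :
    ∑ i ∈ s, w i * (q * nodal s x).eval (x i) = 0 :=
  Finset.sum_eq_zero fun i hi => by rw [eval_mul, eval_nodal_at_node hi, mul_zero, mul_zero]

theorem multiple_gaussian_quadrature_sharp_general (r : ℕ)
    (μ : Fin r → (Polynomial ℂ →ₗ[ℂ] ℂ)) (hwc : WeaklyComplete r μ)
    (n : ℕ) (P : Polynomial ℂ)
    (hmonic : P.Monic) (hdeg : P.natDegree = n)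
    (x : Fin n → ℂ)
    (hzeros : P = ∏ ℓ : Fin n, (X - C (x ℓ))) :
    ∃ j : Fin r, ∃ h : Polynomial ℂ, h.natDegree ≤ n - 1 + properIndex r (n + 1) j ∧
      μ j h ≠ ∑ ℓ : Fin n, μ j (Lagrange.basis Finset.univ x ℓ) * h.eval (x ℓ) := by
  obtain ⟨j, ℓ, hℓ, hne⟩ :=
    (hwc (n + 1)).exists_moment_ne_zero hmonic.ne_zero (by omega)
  refine ⟨j, X ^ ℓ * P, ?_, ?_⟩
  · rw [natDegree_mul (pow_ne_zero _ X_ne_zero) hmonic.ne_zero, natDegree_X_pow, hdeg]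
    omega
  · have hquad := Lagrange.sum_mul_eval_mul_nodal_eq_zero Finset.univ x
      (fun ℓ => μ j (Lagrange.basis Finset.univ x ℓ)) (X ^ ℓ)
    rw [Lagrange.nodal, ← hzeros] at hquad
    rwa [hquad]

/-- sharpness of multiple Gaussian quadrature: the interpolatory rules with
nodes at the simple zeros of `P_n` do not have vector order `(n−1)e + ν_{n+1}`: there is a
`j` and a polynomial `h` of degree at most `n − 1 + ν_{n+1}(j)` on which the `j`-th rule is
not exact. -/
theorem multiple_gaussian_quadrature_sharp (r : ℕ) (hr : 0 < r)
    (μ : Fin r → (Polynomial ℂ →ₗ[ℂ] ℂ)) (hwc : WeaklyComplete r μ)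
    (n : ℕ) (hn : 0 < n) (P : Polynomial ℂ)
    (hmonic : P.Monic) (hdeg : P.natDegree = n)
    (horth : TypeIISol r μ n P)
    (x : Fin n → ℂ) (hinj : Function.Injective x)
    (hzeros : P = ∏ ℓ : Fin n, (X - C (x ℓ))) :
    ∃ j : Fin r, ∃ h : Polynomial ℂ, h.natDegree ≤ n - 1 + properIndex r (n + 1) j ∧
      μ j h ≠ ∑ ℓ : Fin n, μ j (Lagrange.basis Finset.univ x ℓ) * h.eval (x ℓ) :=
  multiple_gaussian_quadrature_sharp_general r μ hwc n P hmonic hdeg x hzeros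
end

section
/- Eigenvector formula for multiple Gaussian weights: let x_{ℓ,n} be a simple zero of P_n, v_{ℓ,n} the right eigenvector of L_n for x_{ℓ,n} normalized to have first component 1, and u_{ℓ,n} the left eigenvector whose first nonzero component (at position k_ℓ ≤ min(r,n)) equals 1. Then u_{ℓ,n}^T v_{ℓ,n} ≠ 0, and the interpolatory quadrature weights satisfy w^{(j)}_{ℓ,n} = (1/(u_{ℓ,n}^T v_{ℓ,n})) Σ_{k=1}^{min(j,n)} C_{j,k} u_{ℓ,n}(k) for j = 1,...,r, where C_{j,k} = ∫ P_{k−1}(x) dμ_j(x). Moreover C_{j,j} ≠ 0 for j = 1,...,r and w^{(j)}_{ℓ,n} = 0 for j = 1,...,k_ℓ−1. -/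
open Polynomial

/-- The `n × n` banded lower Hessenberg matrix `L_n` with superdiagonal entries `1` and
entries `a_{i,j}` on the `j`-th subdiagonal for `j ≤ r`. -/
def hessenberg (r n : ℕ) (a : ℕ → ℕ → ℂ) : Matrix (Fin n) (Fin n) ℂ :=
  Matrix.of fun i k =>
    if i.val + 1 = k.val then 1
    else if k.val ≤ i.val ∧ i.val - k.val ≤ r then a i.val (i.val - k.val) else 0

/-! The left eigenvector `u` encodes the polynomial `f = ∑ u i • P i`, of degree `< n`. Reading
`u L_n = x_ℓ u` through the recurrence shows that `(X - x_ℓ) f` is a multiple of `P_n`, so `f`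
vanishes at every node except `x_ℓ` and is therefore `f(x_ℓ)` times the Lagrange basis polynomial
`l_ℓ`. Since `u ⬝ᵥ (P_i(x_ℓ))_i = f(x_ℓ)` and the `P_i` are independent, this number is nonzero,
and integrating `f` against `μ_j` kills every `P_i` with `i > j`. If `μ_j(P_j) = 0`, or
`a_{m,r} = 0` with `m ≥ r`, then `P_j` (resp. `P_m`) would satisfy the type II conditions of
`ν_{j+1}` (resp. `ν_{m+1}`) without having full degree, against normality. Read off column `k - r`
of `u L_n = x_ℓ u`, `a_{k,r} ≠ 0` forces the first nonzero entry of `u` to sit before `r`. -/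

lemma lt_properIndex_iff {r m ℓ : ℕ} (j : Fin r) :
    ℓ < properIndex r m j ↔ r * ℓ + j + 1 ≤ m := by
  have hj := j.isLt
  rw [properIndex, Nat.lt_iff_add_one_le, Nat.le_div_iff_mul_le j.pos, add_mul, one_mul,
    mul_comm ℓ r]
  omega

namespace TypeIISol

variable {r m : ℕ} {μ : Fin r → (ℂ[X] →ₗ[ℂ] ℂ)} {Q : ℂ[X]}

lemma map_X_pow_mul_eq_zero (hQ : TypeIISol r μ m Q) {j : Fin r} {ℓ : ℕ}
    (h : r * ℓ + j + 1 ≤ m) : μ j (X ^ ℓ * Q) = 0 :=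
  hQ.2 j ℓ ((lt_properIndex_iff j).2 h)

lemma map_eq_zero (hQ : TypeIISol r μ m Q) {j : Fin r} (h : (j : ℕ) < m) : μ j Q = 0 := by
  simpa using hQ.map_X_pow_mul_eq_zero (ℓ := 0) (by omega)

lemma succ (hQ : TypeIISol r μ m Q)
    (hedge : ∀ (j : Fin r) (ℓ : ℕ), r * ℓ + j = m → μ j (X ^ ℓ * Q) = 0) :
    TypeIISol r μ (m + 1) Q := by
  refine ⟨hQ.1.trans (by exact_mod_cast m.le_succ), fun j ℓ hℓ => ?_⟩
  rw [lt_properIndex_iff] at hℓ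
  rcases (show r * ℓ + j + 1 ≤ m ∨ r * ℓ + j = m by omega) with h | h
  · exact hQ.map_X_pow_mul_eq_zero h
  · exact hedge j ℓ h

end TypeIISol

namespace NormalIndex

variable {r m : ℕ} {μ : Fin r → (ℂ[X] →ₗ[ℂ] ℂ)}

lemma not_typeIISol {Q : ℂ[X]} (hN : NormalIndex r μ (m + 1)) (hmonic : Q.Monic)
    (hdeg : Q.natDegree = m) : ¬ TypeIISol r μ (m + 1) Q := fun hQ =>
  (hN.1 Q hQ).elim hmonic.ne_zero (by omega)

lemma map_ne_zero {j : Fin r} {Q : ℂ[X]} (hN : NormalIndex r μ (j + 1))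
    (hQ : TypeIISol r μ j Q) (hmonic : Q.Monic) (hdeg : Q.natDegree = j) : μ j Q ≠ 0 := by
  intro h0
  refine hN.not_typeIISol hmonic hdeg (hQ.succ fun i ℓ h => ?_)
  obtain rfl : ℓ = 0 := by
    by_contra hℓ
    have : r ≤ r * ℓ := Nat.le_mul_of_pos_right r (Nat.pos_of_ne_zero hℓ)
    omega
  obtain rfl : i = j := Fin.ext (by omega)
  simpa using h0

lemma recurrence_coeff_ne_zero {P : ℕ → ℂ[X]} {b : ℕ → ℂ} (hN : NormalIndex r μ (m + 1))
    (horth : ∀ m, TypeIISol r μ m (P m)) (hmonic : (P m).Monic) (hdeg : (P m).natDegree = m)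
    (hrec : X * P m = P (m + 1) +
      ∑ j ∈ Finset.range (r + 1), b j • (if j ≤ m then P (m - j) else 0))
    (hrm : r ≤ m) : b r ≠ 0 := by
  intro h0
  refine hN.not_typeIISol hmonic hdeg ((horth m).succ fun i ℓ h => ?_)
  have hi := i.isLt
  obtain ⟨t, rfl⟩ : ∃ t, ℓ = t + 1 := Nat.exists_eq_add_one.2 (Nat.pos_of_ne_zero (by
    rintro rfl
    omega))
  rw [Nat.mul_succ] at h
  rw [pow_succ, mul_assoc, hrec, mul_add, map_add,
    (horth (m + 1)).map_X_pow_mul_eq_zero (by omega), zero_add, Finset.mul_sum, map_sum]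
  refine Finset.sum_eq_zero fun j hj => ?_
  rw [Finset.mem_range] at hj
  rcases (show j = r ∨ j < r by omega) with rfl | hjr
  · rw [h0, zero_smul, mul_zero, map_zero]
  · rw [if_pos (by omega), mul_smul_comm, map_smul,
      (horth (m - j)).map_X_pow_mul_eq_zero (by omega), smul_zero]

end NormalIndex

section Hessenberg

variable {r n : ℕ} (a : ℕ → ℕ → ℂ)

lemma sum_hessenberg_smul {M : Type*} [AddCommMonoid M] [Module ℂ M] (E : ℕ → M) (i : Fin n) :
    ∑ k : Fin n, hessenberg r n a i k • E k =
      (if (i : ℕ) + 1 < n then E (i + 1) else 0) +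
        ∑ j ∈ Finset.range (r + 1), a i j • (if j ≤ (i : ℕ) then E (i - j) else 0) := by
  have hsplit : ∀ k : Fin n, hessenberg r n a i k • E k =
      (if (i : ℕ) + 1 = k then E k else 0) +
        (if (k : ℕ) ≤ i ∧ (i : ℕ) - k ≤ r then a i (i - k) • E k else 0) := by
    intro k
    simp only [hessenberg, Matrix.of_apply]
    split_ifs <;> first | omega | simp
  simp only [hsplit, Finset.sum_add_distrib,
    Fin.sum_univ_eq_sum_range (fun k => if (i : ℕ) + 1 = k then E k else 0),
    Fin.sum_univ_eq_sum_range
      (fun k => if k ≤ (i : ℕ) ∧ (i : ℕ) - k ≤ r then a i (i - k) • E k else 0),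
    Finset.sum_ite_eq, Finset.mem_range, smul_ite, smul_zero]
  congr 1
  rw [← Finset.sum_filter, ← Finset.sum_filter]
  have hi := i.isLt
  refine Finset.sum_nbij' (fun k => i - k) (fun j => i - j) ?_ ?_ ?_ ?_ ?_ <;>
    simp only [Finset.mem_filter, Finset.mem_range]
  · intro k hk; omega
  · intro j hj; omega
  · intro k hk; omega
  · intro j hj; omega
  · intro k hk; rw [Nat.sub_sub_self hk.2.1]

lemma vecMul_hessenberg_apply_sub {u : Fin n → ℂ} {k : Fin n} (hk0 : ∀ i < k, u i = 0)
    (hrk : r ≤ k) : Matrix.vecMul u (hessenberg r n a) ⟨k - r, by omega⟩ = u k * a k r := by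
  rw [Matrix.vecMul, dotProduct, Finset.sum_eq_single k]
  · simp only [hessenberg, Matrix.of_apply]
    rw [if_neg (by omega), if_pos ⟨by omega, by omega⟩, Nat.sub_sub_self hrk]
  · intro i _ hik
    rcases lt_or_gt_of_ne hik with h | h
    · rw [hk0 i h, zero_mul]
    · simp only [hessenberg, Matrix.of_apply]
      rw [if_neg (by omega), if_neg (by omega), mul_zero]
  · simp

lemma dvd_X_sub_C_mul_sum_smul {P : ℕ → ℂ[X]}
    (hPrec : ∀ m, X * P m = P (m + 1) +
      ∑ j ∈ Finset.range (r + 1), a m j • (if j ≤ m then P (m - j) else 0))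
    {u : Fin n → ℂ} {z : ℂ} (hu : Matrix.vecMul u (hessenberg r n a) = z • u) :
    P n ∣ (X - C z) * ∑ i : Fin n, u i • P i := by
  have hrow : ∀ i : Fin n, P n ∣ X * P i - ∑ k : Fin n, hessenberg r n a i k • P k := by
    intro i
    rw [sum_hessenberg_smul, hPrec]
    split_ifs with h
    · simp
    · rw [show (i : ℕ) + 1 = n by omega]
      simp
  have hsum : (X - C z) * ∑ i : Fin n, u i • P i =
      ∑ i : Fin n, u i • (X * P i - ∑ k : Fin n, hessenberg r n a i k • P k) := calc
    _ = X * ∑ i : Fin n, u i • P i - ∑ k : Fin n, (z • u) k • P k := by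
      simp only [sub_mul, Pi.smul_apply, smul_eq_mul, mul_smul, ← Finset.smul_sum, C_mul']
    _ = X * ∑ i : Fin n, u i • P i -
          ∑ i : Fin n, u i • ∑ k : Fin n, hessenberg r n a i k • P k := by
      simp only [← hu, Matrix.vecMul, dotProduct, Finset.sum_smul, Finset.smul_sum, smul_smul]
      rw [Finset.sum_comm]
    _ = _ := by
      simp only [smul_sub, Finset.sum_sub_distrib, Finset.mul_sum, mul_smul_comm]
  rw [hsum]
  exact Finset.dvd_sum fun i _ => dvd_smul_of_dvd _ (hrow i)

end Hessenberg

lemma Lagrange.eq_eval_smul_basis_of_eval_eq_zero {F ι : Type*} [Field F] [DecidableEq ι]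
    {s : Finset ι} {v : ι → F} {i : ι} {f : F[X]} (hvs : Set.InjOn v s) (hi : i ∈ s)
    (hdeg : f.degree < s.card) (hzero : ∀ j ∈ s, j ≠ i → f.eval (v j) = 0) :
    f = f.eval (v i) • Lagrange.basis s v i := by
  conv_lhs => rw [Lagrange.eq_interpolate hvs hdeg]
  rw [Lagrange.interpolate_apply, smul_eq_C_mul,
    Finset.sum_eq_single i (fun j hj hji => by rw [hzero j hj hji, C_0, zero_mul]) (absurd hi)]

lemma linearIndependent_of_natDegree_eq {R : Type*} [Ring R] [IsDomain R] {P : ℕ → R[X]}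
    (hne : ∀ m, P m ≠ 0) (hdeg : ∀ m, (P m).natDegree = m) : LinearIndependent R P :=
  Polynomial.Sequence.linearIndependent
    ⟨P, fun m => by rw [degree_eq_natDegree (hne m), hdeg]⟩

section Eigenvector

variable {r n : ℕ} {P : ℕ → ℂ[X]} {a : ℕ → ℕ → ℂ} {u : Fin n → ℂ} {z : ℂ}

lemma lt_of_vecMul_hessenberg_eq_smul (hr : 0 < r) {μ : Fin r → (ℂ[X] →ₗ[ℂ] ℂ)}
    (hwc : WeaklyComplete r μ) (hmonic : ∀ m, (P m).Monic) (hdeg : ∀ m, (P m).natDegree = m)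
    (horth : ∀ m, TypeIISol r μ m (P m))
    (hPrec : ∀ m, X * P m = P (m + 1) +
      ∑ j ∈ Finset.range (r + 1), a m j • (if j ≤ m then P (m - j) else 0))
    (hu : Matrix.vecMul u (hessenberg r n a) = z • u) {k : Fin n} (hk1 : u k = 1)
    (hk0 : ∀ i < k, u i = 0) : (k : ℕ) < r := by
  by_contra! hrk
  have hcol := vecMul_hessenberg_apply_sub a hk0 hrk
  rw [hu, Pi.smul_apply, hk0 _ (Fin.lt_def.2 (by dsimp only; omega)), smul_zero, hk1,
    one_mul] at hcol
  exact (hwc _).recurrence_coeff_ne_zero horth (hmonic _) (hdeg _) (hPrec _) hrk hcol.symm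

lemma sum_smul_eq_eval_smul_lagrangeBasis (hdeg : ∀ m, (P m).natDegree = m)
    (hPrec : ∀ m, X * P m = P (m + 1) +
      ∑ j ∈ Finset.range (r + 1), a m j • (if j ≤ m then P (m - j) else 0))
    {x : Fin n → ℂ} (hinj : Function.Injective x) (hroots : ∀ t, (P n).eval (x t) = 0)
    {ℓ : Fin n}
    (hu : Matrix.vecMul u (hessenberg r n a) = x ℓ • u) :
    ∑ i : Fin n, u i • P i =
      (∑ i : Fin n, u i • P i).eval (x ℓ) • Lagrange.basis Finset.univ x ℓ := by
  refine Lagrange.eq_eval_smul_basis_of_eval_eq_zero hinj.injOn (Finset.mem_univ ℓ) ?_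
    fun t _ ht => ?_
  · rw [Finset.card_univ, Fintype.card_fin, ← mem_degreeLT]
    exact Submodule.sum_mem _ fun i _ => Submodule.smul_mem _ _ (mem_degreeLT.2
      (degree_le_natDegree.trans_lt (by rw [hdeg]; exact_mod_cast i.isLt)))
  · obtain ⟨g, hg⟩ := dvd_X_sub_C_mul_sum_smul a hPrec hu
    have h := congrArg (eval (x t)) hg
    rw [eval_mul, eval_mul, hroots, zero_mul, eval_sub, eval_X, eval_C] at h
    exact (mul_eq_zero.1 h).resolve_left (sub_ne_zero.2 (hinj.ne ht))

end Eigenvector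

open Matrix in
theorem multiple_gauss_weights_eigenvector_general (r : ℕ) (hr : 0 < r)
    (μ : Fin r → (Polynomial ℂ →ₗ[ℂ] ℂ)) (hwc : WeaklyComplete r μ)
    (P : ℕ → Polynomial ℂ)
    (hmonic : ∀ m, (P m).Monic) (hdeg : ∀ m, (P m).natDegree = m)
    (horth : ∀ m, TypeIISol r μ m (P m))
    (a : ℕ → ℕ → ℂ)
    (hPrec : ∀ m, X * P m = P (m + 1) +
      ∑ j ∈ Finset.range (r + 1), a m j • (if j ≤ m then P (m - j) else 0))
    (n : ℕ)
    (x : Fin n → ℂ) (hinj : Function.Injective x)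
    (hzeros : P n = ∏ t : Fin n, (X - C (x t)))
    (ℓ : Fin n)
    (u : Fin n → ℂ) (hu : Matrix.vecMul u (hessenberg r n a) = x ℓ • u)
    (hune : u ≠ 0) (k : Fin n) (hk1 : u k = 1) (hk0 : ∀ i : Fin n, i < k → u i = 0) :
    k.val + 1 ≤ min r n ∧
    (u ⬝ᵥ fun i : Fin n => (P i.val).eval (x ℓ)) ≠ 0 ∧
    (∀ j : Fin r,
      μ j (Lagrange.basis Finset.univ x ℓ) =
        (1 / (u ⬝ᵥ fun i : Fin n => (P i.val).eval (x ℓ))) *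
          ∑ k' ∈ Finset.univ.filter (fun k' : Fin n => k'.val ≤ j.val),
            μ j (P k'.val) * u k') ∧
    (∀ j : Fin r, μ j (P j.val) ≠ 0) ∧
    (∀ j : Fin r, j.val < k.val → μ j (Lagrange.basis Finset.univ x ℓ) = 0) := by
  set f : ℂ[X] := ∑ i : Fin n, u i • P i with hf
  have heval : (u ⬝ᵥ fun i : Fin n => (P i.val).eval (x ℓ)) = f.eval (x ℓ) := by
    simp [hf, dotProduct, eval_finsetSum]
  have hroots : ∀ t, (P n).eval (x t) = 0 := fun t => by
    rw [hzeros, eval_prod]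
    exact Finset.prod_eq_zero (Finset.mem_univ t) (by simp)
  have hf_basis : f = f.eval (x ℓ) • Lagrange.basis Finset.univ x ℓ :=
    sum_smul_eq_eval_smul_lagrangeBasis hdeg hPrec hinj hroots hu
  have hf_ne : f ≠ 0 := fun h => hune (funext (Fintype.linearIndependent_iff.1
    ((linearIndependent_of_natDegree_eq (fun m => (hmonic m).ne_zero) hdeg).comp _
      Fin.val_injective) u h))
  have hD : f.eval (x ℓ) ≠ 0 := fun h => hf_ne (by rw [hf_basis, h, zero_smul])
  have hweight : ∀ j : Fin r, μ j (Lagrange.basis Finset.univ x ℓ) =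
      (1 / f.eval (x ℓ)) * ∑ k' ∈ Finset.univ.filter (fun k' : Fin n => k'.val ≤ j.val),
        μ j (P k'.val) * u k' := by
    intro j
    have hμf : f.eval (x ℓ) * μ j (Lagrange.basis Finset.univ x ℓ) =
        ∑ i : Fin n, μ j (P i) * u i := by
      rw [← smul_eq_mul, ← map_smul, ← hf_basis]
      simp only [hf, map_sum, map_smul, smul_eq_mul, mul_comm]
    rw [Finset.sum_filter_of_ne fun i _ h => by_contra fun hij =>
        h (by rw [(horth i).map_eq_zero (by omega), zero_mul]),
      ← hμf, one_div, inv_mul_cancel_left₀ hD]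
  rw [heval]
  refine ⟨le_min (lt_of_vecMul_hessenberg_eq_smul hr hwc hmonic hdeg horth hPrec hu hk1 hk0)
    k.isLt, hD, hweight, fun j => (hwc _).map_ne_zero (horth j) (hmonic j) (hdeg j),
    fun j hjk => ?_⟩
  rw [hweight, Finset.sum_eq_zero fun i hi => ?_, mul_zero]
  rw [hk0 i (Fin.lt_def.2 ((Finset.mem_filter.1 hi).2.trans_lt hjk)), mul_zero]

open Matrix in
/-- eigenvector formula for the multiple Gaussian quadrature weights.  Let
`x ℓ` be a simple zero of `P_n`, `v` the right eigenvector of `L_n` normalized by `v 0 = 1`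
(i.e. `v = (P_0(x ℓ),…,P_{n−1}(x ℓ))`), and `u` the left eigenvector whose first nonzero
component, at (0-based) position `k`, equals `1`.  Then `k+1 ≤ min(r,n)`, `uᵀv ≠ 0`, the
interpolatory weights satisfy
`w^{(j)}_ℓ = (1/(uᵀv)) ∑_{k'=1}^{min(j,n)} C_{j,k'} u(k')` with `C_{j,k'} = ∫ P_{k'−1} dμ_j`,
the constants `C_{j,j}` are nonzero, and `w^{(j)}_ℓ = 0` for `j = 1,…,k`. -/
theorem multiple_gauss_weights_eigenvector (r : ℕ) (hr : 0 < r)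
    (μ : Fin r → (Polynomial ℂ →ₗ[ℂ] ℂ)) (hwc : WeaklyComplete r μ)
    (P : ℕ → Polynomial ℂ)
    (hmonic : ∀ m, (P m).Monic) (hdeg : ∀ m, (P m).natDegree = m)
    (horth : ∀ m, TypeIISol r μ m (P m))
    (a : ℕ → ℕ → ℂ)
    (hPrec : ∀ m, X * P m = P (m + 1) +
      ∑ j ∈ Finset.range (r + 1), a m j • (if j ≤ m then P (m - j) else 0))
    (n : ℕ) (hn : 0 < n)
    (x : Fin n → ℂ) (hinj : Function.Injective x)
    (hzeros : P n = ∏ t : Fin n, (X - C (x t)))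
    (ℓ : Fin n)
    (u : Fin n → ℂ) (hu : Matrix.vecMul u (hessenberg r n a) = x ℓ • u)
    (hune : u ≠ 0) (k : Fin n) (hk1 : u k = 1) (hk0 : ∀ i : Fin n, i < k → u i = 0) :
    k.val + 1 ≤ min r n ∧
    (u ⬝ᵥ fun i : Fin n => (P i.val).eval (x ℓ)) ≠ 0 ∧
    (∀ j : Fin r,
      μ j (Lagrange.basis Finset.univ x ℓ) =
        (1 / (u ⬝ᵥ fun i : Fin n => (P i.val).eval (x ℓ))) *
          ∑ k' ∈ Finset.univ.filter (fun k' : Fin n => k'.val ≤ j.val),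
            μ j (P k'.val) * u k') ∧
    (∀ j : Fin r, μ j (P j.val) ≠ 0) ∧
    (∀ j : Fin r, j.val < k.val → μ j (Lagrange.basis Finset.univ x ℓ) = 0) :=
  multiple_gauss_weights_eigenvector_general r hr μ hwc P hmonic hdeg horth a hPrec n x hinj hzeros
    ℓ u hu hune k hk1 hk0
end

section
/- Duality between type I initial values and first moments of type II polynomials: with C_{j,k} = ∫ P_{k−1} dμ_j and A_{i,j} the components of the type I initial vector polynomials (1 ≤ j ≤ i ≤ r), one has Σ_{j=k}^{i} A_{i,j} C_{j,k} = δ_{ik} for all 1 ≤ k ≤ i ≤ r; consequently the upper triangular matrix (C_{j,k}) and the lower triangular matrix (A_{i,j}) determine each other uniquely via these triangular linear systems, given C_{j,j} ≠ 0 and A_{j,j} ≠ 0. -/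
open Polynomial

/-- The type I multiple orthogonal vector polynomials `A_n = (A_{n,1},…,A_{n,r})`,
with the normalization `∫ x^{n-1} ∑_j A_{n,j}(x) dμ_j(x) = 1`. -/
def TypeINormalized (r : ℕ) (μ : Fin r → (Polynomial ℂ →ₗ[ℂ] ℂ))
    (A : ℕ → Fin r → Polynomial ℂ) : Prop :=
  ∀ n, 1 ≤ n →
    (∀ j : Fin r, (A n j).degree < (properIndex r n j : WithBot ℕ)) ∧
    (∀ ℓ : ℕ, ℓ + 2 ≤ n → ∑ j : Fin r, μ j (X ^ ℓ * A n j) = 0) ∧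
    (∑ j : Fin r, μ j (X ^ (n - 1) * A n j) = 1)

/-!
Fix `i < r` and put `c_j = A_{i+1,j}`; these are constants, zero for `j > i`. The functional
`L = ∑_j c_j μ_j` then satisfies `L(x^ℓ) = δ_{ℓ,i}` for `ℓ ≤ i` by the type I conditions, so for
the monic `P_k` of degree `k ≤ i` we get `L(P_k) = δ_{k,i}`. Since `μ_j(P_k) = 0` for `j < k` by
the type II conditions, `L(P_k)` is exactly the sum over `k ≤ j ≤ i`.
-/

namespace Polynomial

variable {R M : Type*} [Ring R] [AddCommGroup M] [Module R M]

theorem linearMap_eq_zero_of_degree_lt (L : R[X] →ₗ[R] M) {m : ℕ}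
    (hlow : ∀ ℓ < m, L (X ^ ℓ) = 0) {p : R[X]} (hp : p.degree < m) : L p = 0 := by
  classical
  have hker : degreeLT R m ≤ LinearMap.ker L := by
    rw [degreeLT_eq_span_X_pow, Submodule.span_le, Finset.coe_image, Set.image_subset_iff]
    exact fun ℓ hℓ => hlow ℓ (by simpa using hℓ)
  exact hker (mem_degreeLT.mpr hp)

theorem linearMap_monic_eq_ite [Nontrivial R] (L : R[X] →ₗ[R] M) {m : ℕ}
    (hlow : ∀ ℓ < m, L (X ^ ℓ) = 0) {p : R[X]} (hp : p.Monic) (hdeg : p.natDegree ≤ m) :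
    L p = if p.natDegree = m then L (X ^ m) else 0 := by
  split_ifs with hm
  · have hrest : (p - X ^ m).degree < (m : WithBot ℕ) := by
      subst hm
      rw [← degree_eq_natDegree hp.ne_zero]
      exact degree_sub_lt_left (by simp [degree_eq_natDegree hp.ne_zero]) hp.ne_zero
        (by simp [hp.leadingCoeff])
    rw [← sub_add_cancel p (X ^ m), map_add, linearMap_eq_zero_of_degree_lt L hlow hrest,
      zero_add]
  · exact linearMap_eq_zero_of_degree_lt L hlow
      (degree_le_natDegree.trans_lt (WithBot.coe_lt_coe.mpr (lt_of_le_of_ne hdeg hm)))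

end Polynomial

theorem properIndex_succ_le_one {r i : ℕ} (hi : i < r) (j : Fin r) :
    properIndex r (i + 1) j ≤ 1 :=
  Nat.le_of_lt_succ (Nat.div_lt_of_lt_mul (by omega))

theorem properIndex_succ_eq_zero {r i : ℕ} {j : Fin r} (hij : i < j.val) :
    properIndex r (i + 1) j = 0 :=
  Nat.div_eq_of_lt (by omega)

theorem properIndex_pos {r n : ℕ} {j : Fin r} (hj : j.val < n) : 0 < properIndex r n j :=
  Nat.div_pos (by omega) j.pos

theorem TypeIISol.apply_eq_zero_of_lt {r n : ℕ} {μ : Fin r → (ℂ[X] →ₗ[ℂ] ℂ)} {P : ℂ[X]}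
    (hP : TypeIISol r μ n P) {j : Fin r} (hj : j.val < n) : μ j P = 0 := by
  simpa using hP.2 j 0 (properIndex_pos hj)

namespace TypeINormalized

variable {r i : ℕ} {μ : Fin r → (ℂ[X] →ₗ[ℂ] ℂ)} {A : ℕ → Fin r → ℂ[X]}

theorem eq_C_coeff_zero (hA : TypeINormalized r μ A) (hi : i < r) (j : Fin r) :
    A (i + 1) j = C ((A (i + 1) j).coeff 0) := by
  refine eq_C_of_degree_le_zero (Order.le_of_lt_succ ?_)
  calc (A (i + 1) j).degree < properIndex r (i + 1) j := (hA (i + 1) (by omega)).1 j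
    _ ≤ 1 := by exact_mod_cast properIndex_succ_le_one hi j

theorem eq_zero_of_lt (hA : TypeINormalized r μ A) {j : Fin r} (hij : i < j.val) :
    A (i + 1) j = 0 := by
  have h := (hA (i + 1) (by omega)).1 j
  rw [properIndex_succ_eq_zero hij] at h
  exact degree_eq_bot.mp (Nat.WithBot.lt_zero_iff.mp h)

theorem sum_coeff_zero_smul_apply (hA : TypeINormalized r μ A) (hi : i < r) (Q : ℂ[X]) :
    (∑ j, (A (i + 1) j).coeff 0 • μ j) Q = ∑ j, μ j (Q * A (i + 1) j) := by
  simp only [LinearMap.sum_apply, LinearMap.smul_apply, smul_eq_mul]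
  refine Finset.sum_congr rfl fun j _ => ?_
  rw [hA.eq_C_coeff_zero hi j, coeff_C_zero, mul_comm Q, ← smul_eq_C_mul, map_smul, smul_eq_mul]

end TypeINormalized

theorem typeI_initial_moments_duality_general (r : ℕ)
    (μ : Fin r → (Polynomial ℂ →ₗ[ℂ] ℂ))
    (P : ℕ → Polynomial ℂ)
    (hmonic : ∀ n, (P n).Monic) (hdeg : ∀ n, (P n).natDegree = n)
    (horth : ∀ n, TypeIISol r μ n (P n))
    (A : ℕ → Fin r → Polynomial ℂ) (hA : TypeINormalized r μ A) :
    ∀ i k : Fin r, k ≤ i →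
      ∑ j ∈ Finset.Icc k i, (A (i.val + 1) j).coeff 0 * μ j (P k.val) =
        if k = i then 1 else 0 := by
  intro i k hki
  obtain ⟨-, hvan, hnorm⟩ := hA (i.val + 1) (by omega)
  set L := ∑ j, (A (i.val + 1) j).coeff 0 • μ j
  have hL := hA.sum_coeff_zero_smul_apply i.isLt
  have hlow : ∀ ℓ < i.val, L (X ^ ℓ) = 0 := fun ℓ hℓ => (hL _).trans (hvan ℓ (by omega))
  have htop : L (X ^ i.val) = 1 := (hL _).trans (by simpa using hnorm)
  have hsum : ∑ j ∈ Finset.Icc k i, (A (i.val + 1) j).coeff 0 * μ j (P k.val) = L (P k.val) := by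
    simp only [L, LinearMap.sum_apply, LinearMap.smul_apply, smul_eq_mul]
    refine Finset.sum_subset (Finset.subset_univ _) fun j _ hj => ?_
    rcases not_and_or.mp (Finset.mem_Icc.not.mp hj) with hkj | hji
    · rw [(horth k.val).apply_eq_zero_of_lt (not_le.mp hkj), mul_zero]
    · rw [hA.eq_zero_of_lt (not_le.mp hji), coeff_zero, zero_mul]
  rw [hsum, Polynomial.linearMap_monic_eq_ite L hlow (hmonic _) ((hdeg _).trans_le hki),
    htop, hdeg]
  exact if_congr Fin.val_inj rfl rfl

/-- duality between the type I initial values and the first moments of the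
type II polynomials: with `C_{j,k} = ∫ P_{k−1} dμ_j` and `A_{i,j}` the (constant) components
of the initial type I vector polynomials, `∑_{j=k}^{i} A_{i,j} C_{j,k} = δ_{ik}` for all
`1 ≤ k ≤ i ≤ r`. -/
theorem typeI_initial_moments_duality (r : ℕ) (hr : 0 < r)
    (μ : Fin r → (Polynomial ℂ →ₗ[ℂ] ℂ)) (hwc : WeaklyComplete r μ)
    (P : ℕ → Polynomial ℂ)
    (hmonic : ∀ n, (P n).Monic) (hdeg : ∀ n, (P n).natDegree = n)
    (horth : ∀ n, TypeIISol r μ n (P n))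
    (A : ℕ → Fin r → Polynomial ℂ) (hA : TypeINormalized r μ A) :
    ∀ i k : Fin r, k ≤ i →
      ∑ j ∈ Finset.Icc k i, (A (i.val + 1) j).coeff 0 * μ j (P k.val) =
        if k = i then 1 else 0 :=
  typeI_initial_moments_duality_general r μ P hmonic hdeg horth A hA
end

section
/- Multiple Gaussian quadrature as discrete multiple orthogonality: under multiple Gaussian quadrature with nodes the simple zeros of P_n and interpolatory weights w^{(j)}_{ℓ,n}, the discrete measures μ_{j,n} = Σ_{ℓ=1}^{n} w^{(j)}_{ℓ,n} δ_{x_{ℓ,n}} admit A_1,...,A_n as type I and P_0,...,P_{n−1} as type II multiple orthogonal polynomials: all orthogonality conditions ∫ x^ℓ Σ_j A_{k,j} dμ_{j,n} = 0 (ℓ ≤ k−2), the normalizations ∫ x^{k−1} Σ_j A_{k,j} dμ_{j,n} = 1 (k ≤ n), and ∫ P_m x^ℓ dμ_{j,n} = 0 (ℓ < ν_m(j), m ≤ n−1) hold with the original measures replaced by μ_{j,n}. -/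
open Polynomial

/-!
Write `ω = P_n = ∏ (X - x_t)`; by type II orthogonality `μ_j` annihilates `q ω` whenever
`deg q < ν_n(j)`. Dividing `Q` with `deg Q < n + ν_n(j)` by `ω` leaves such a multiple plus a
remainder of degree `< n`, which the interpolatory rule integrates exactly; since `ω` vanishes
at the nodes, the rule integrates `Q` exactly. As `ν` is monotone, every polynomial occurring in
the type I conditions for `k ≤ n` and the type II conditions for `m < n` has degree in that range.
-/

theorem apply_mul_eq_zero_of_degree_lt {R M : Type*} [CommSemiring R] [AddCommMonoid M]
    [Module R M] (μ : R[X] →ₗ[R] M) {p q : R[X]} {N : ℕ} (hp : ∀ ℓ < N, μ (X ^ ℓ * p) = 0)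
    (hq : q.degree < N) : μ (q * p) = 0 := by
  classical
  have hker : degreeLT R N ≤ LinearMap.ker (μ ∘ₗ LinearMap.mulRight R p) := by
    rw [degreeLT_eq_span_X_pow, Submodule.span_le, Finset.coe_image, Set.image_subset_iff]
    intro ℓ hℓ
    exact hp ℓ (Finset.mem_range.mp hℓ)
  exact hker (mem_degreeLT.mpr hq)

theorem degree_X_pow_mul_lt {R : Type*} [Semiring R] {p : R[X]} {a : ℕ} (ℓ : ℕ)
    (hp : p.degree < a) : (X ^ ℓ * p).degree < ((ℓ + a : ℕ) : WithBot ℕ) :=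
  calc (X ^ ℓ * p).degree ≤ (X ^ ℓ : R[X]).degree + p.degree := degree_mul_le _ _
    _ ≤ ℓ + p.degree := add_le_add_left (degree_X_pow_le ℓ) _
    _ < ((ℓ + a : ℕ) : WithBot ℕ) := by
      rw [Nat.cast_add]; exact WithBot.add_lt_add_left (WithBot.coe_ne_bot) hp

theorem properIndex_mono_s16 (r : ℕ) (j : Fin r) : Monotone (properIndex r · j) :=
  fun _ _ h => Nat.div_le_div_right (by omega)

section Quadrature

variable {F ι : Type*} [Field F] [Fintype ι] [DecidableEq ι]
  (μ : F[X] →ₗ[F] F) {x : ι → F}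

theorem sum_apply_basis_mul_eval_eq_of_degree_lt (hx : Function.Injective x) {R : F[X]}
    (hR : R.degree < Fintype.card ι) :
    ∑ t, μ (Lagrange.basis Finset.univ x t) * R.eval (x t) = μ R := by
  conv_rhs => rw [Lagrange.eq_interpolate hx.injOn (s := Finset.univ) hR]
  rw [Lagrange.interpolate_apply, map_sum]
  refine Finset.sum_congr rfl fun t _ => ?_
  rw [← smul_eq_C_mul, map_smul, smul_eq_mul, mul_comm]

theorem sum_apply_basis_mul_eval_eq_of_orthogonal (hx : Function.Injective x) {N : ℕ}
    (horth : ∀ ℓ < N, μ (X ^ ℓ * ∏ t, (X - C (x t))) = 0) {Q : F[X]}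
    (hQ : Q.degree < (Fintype.card ι + N : ℕ)) :
    ∑ t, μ (Lagrange.basis Finset.univ x t) * Q.eval (x t) = μ Q := by
  set ω := ∏ t, (X - C (x t))
  have hω : ω.Monic := monic_prod_of_monic _ _ fun t _ => monic_X_sub_C (x t)
  have hω_deg : ω.degree = Fintype.card ι := by simp [ω, degree_prod]
  have hω_root : ∀ t, ω.eval (x t) = 0 := fun t => by
    simp only [ω, eval_prod, eval_sub, eval_X, eval_C]
    exact Finset.prod_eq_zero (Finset.mem_univ t) (sub_self _)
  have hQ_eq := modByMonic_add_div Q ω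
  have hrem : (Q %ₘ ω).degree < Fintype.card ι := hω_deg ▸ degree_modByMonic_lt Q hω
  have hquot : (Q /ₘ ω).degree < N := by
    have : (ω * (Q /ₘ ω)).degree < (Fintype.card ι + N : ℕ) := by
      rw [eq_sub_of_add_eq' hQ_eq]
      refine (degree_sub_le _ _).trans_lt (max_lt hQ (hrem.trans_le ?_))
      exact_mod_cast Nat.le_add_right _ _
    rw [degree_mul, hω_deg, Nat.cast_add] at this
    exact lt_of_add_lt_add_left this
  calc ∑ t, μ (Lagrange.basis Finset.univ x t) * Q.eval (x t)
      = ∑ t, μ (Lagrange.basis Finset.univ x t) * (Q %ₘ ω).eval (x t) := by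
        conv_lhs => rw [← hQ_eq]
        simp [hω_root]
    _ = μ (Q %ₘ ω + ω * (Q /ₘ ω)) := by
        rw [sum_apply_basis_mul_eval_eq_of_degree_lt μ hx hrem, map_add, mul_comm,
          apply_mul_eq_zero_of_degree_lt μ horth hquot, add_zero]
    _ = μ Q := by rw [hQ_eq]

end Quadrature

theorem multiple_gauss_discrete_orthogonality_general (r : ℕ)
    (μ : Fin r → (Polynomial ℂ →ₗ[ℂ] ℂ))
    (P : ℕ → Polynomial ℂ)
    (horth : ∀ m, TypeIISol r μ m (P m))
    (A : ℕ → Fin r → Polynomial ℂ) (hA : TypeINormalized r μ A)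
    (n : ℕ)
    (x : Fin n → ℂ) (hinj : Function.Injective x)
    (hzeros : P n = ∏ t : Fin n, (X - C (x t))) :
    (∀ k, 1 ≤ k → k ≤ n → ∀ ℓ : ℕ, ℓ + 2 ≤ k →
      ∑ j : Fin r, ∑ t : Fin n,
        μ j (Lagrange.basis Finset.univ x t) * (X ^ ℓ * A k j).eval (x t) = 0) ∧
    (∀ k, 1 ≤ k → k ≤ n →
      ∑ j : Fin r, ∑ t : Fin n,
        μ j (Lagrange.basis Finset.univ x t) * (X ^ (k - 1) * A k j).eval (x t) = 1) ∧
    (∀ m, m ≤ n - 1 → ∀ j : Fin r, ∀ ℓ : ℕ, ℓ < properIndex r m j →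
      ∑ t : Fin n,
        μ j (Lagrange.basis Finset.univ x t) * (X ^ ℓ * P m).eval (x t) = 0) := by
  have quadrature : ∀ (j : Fin r) (Q : ℂ[X]),
      Q.degree < ((n + properIndex r n j : ℕ) : WithBot ℕ) →
      ∑ t, μ j (Lagrange.basis Finset.univ x t) * Q.eval (x t) = μ j Q := fun j Q hQ =>
    sum_apply_basis_mul_eval_eq_of_orthogonal (μ j) hinj (hzeros ▸ (horth n).2 j)
      (by rwa [Fintype.card_fin])
  have typeI : ∀ k, 1 ≤ k → k ≤ n → ∀ ℓ, ℓ + 1 ≤ k → ∀ j,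
      ∑ t, μ j (Lagrange.basis Finset.univ x t) * (X ^ ℓ * A k j).eval (x t) =
        μ j (X ^ ℓ * A k j) := fun k hk hkn ℓ hℓ j =>
    have : properIndex r k j ≤ properIndex r n j := properIndex_mono_s16 r j hkn
    quadrature j _ <| (degree_X_pow_mul_lt ℓ ((hA k hk).1 j)).trans_le <| by norm_cast; omega
  refine ⟨fun k hk hkn ℓ hℓ => ?_, fun k hk hkn => ?_, fun m hm j ℓ hℓ => ?_⟩
  · rw [Finset.sum_congr rfl fun j _ => typeI k hk hkn ℓ (by omega) j]
    exact (hA k hk).2.1 ℓ hℓ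
  · rw [Finset.sum_congr rfl fun j _ => typeI k hk hkn (k - 1) (by omega) j]
    exact (hA k hk).2.2
  · have : properIndex r m j ≤ properIndex r n j := properIndex_mono_s16 r j (by omega)
    have hP : (P m).degree < (m + 1 : ℕ) :=
      (horth m).1.trans_lt (by exact_mod_cast Nat.lt_succ_self m)
    rw [quadrature j _ <| (degree_X_pow_mul_lt ℓ hP).trans_le <| by norm_cast; omega]
    exact (horth m).2 j ℓ hℓ

/-- multiple Gaussian quadrature as discrete multiple orthogonality: with
nodes the simple zeros of `P_n` and interpolatory weights `w^{(j)}_t = ∫ l_t dμ_j`, the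
discrete measures `μ_{j,n} = ∑_t w^{(j)}_t δ_{x_t}` admit `A_1,…,A_n` as normalized type I
and `P_0,…,P_{n−1}` as type II multiple orthogonal polynomials. -/
theorem multiple_gauss_discrete_orthogonality (r : ℕ) (hr : 0 < r)
    (μ : Fin r → (Polynomial ℂ →ₗ[ℂ] ℂ)) (hwc : WeaklyComplete r μ)
    (P : ℕ → Polynomial ℂ)
    (hmonic : ∀ m, (P m).Monic) (hdeg : ∀ m, (P m).natDegree = m)
    (horth : ∀ m, TypeIISol r μ m (P m))
    (A : ℕ → Fin r → Polynomial ℂ) (hA : TypeINormalized r μ A)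
    (n : ℕ) (hn : 0 < n)
    (x : Fin n → ℂ) (hinj : Function.Injective x)
    (hzeros : P n = ∏ t : Fin n, (X - C (x t))) :
    (∀ k, 1 ≤ k → k ≤ n → ∀ ℓ : ℕ, ℓ + 2 ≤ k →
      ∑ j : Fin r, ∑ t : Fin n,
        μ j (Lagrange.basis Finset.univ x t) * (X ^ ℓ * A k j).eval (x t) = 0) ∧
    (∀ k, 1 ≤ k → k ≤ n →
      ∑ j : Fin r, ∑ t : Fin n,
        μ j (Lagrange.basis Finset.univ x t) * (X ^ (k - 1) * A k j).eval (x t) = 1) ∧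
    (∀ m, m ≤ n - 1 → ∀ j : Fin r, ∀ ℓ : ℕ, ℓ < properIndex r m j →
      ∑ t : Fin n,
        μ j (Lagrange.basis Finset.univ x t) * (X ^ ℓ * P m).eval (x t) = 0) :=
  multiple_gauss_discrete_orthogonality_general r μ P horth A hA n x hinj hzeros
end

section
/- Invariance under triangular change of measures: if μ_1,...,μ_r form a weakly complete system and new measures σ_i = Σ_{j=1}^{i} α_{i,j} μ_j (i = 1,...,r) are formed with complex coefficients α_{i,j}, then σ_1,...,σ_r form a weakly complete system if and only if α_{j,j} ≠ 0 for j = 1,...,r; in that case the type II multiple orthogonal polynomials of σ_1,...,σ_r with proper multi-indices coincide with those of μ_1,...,μ_r, hence the recurrence coefficients agree. -/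
open Polynomial

/-!
Since the proper multi-index `ν_n` is antitone in the component, for each power `ℓ` the type II
conditions `μ_j (X^ℓ P) = 0` range over an initial segment of the measures. A triangular change
of measures with nonzero diagonal preserves the vanishing on an initial segment (solve the
triangular system from the top-left corner), so both systems have the same type II solutions.
Conversely, if `α_{k,k} = 0`, then `ν_{k+1}` asks `σ_0, …, σ_k` to annihilate `P`, and these
only involve `μ_0, …, μ_{k-1}`: those `k` conditions have a nonzero solution of degree `≤ k`,
which breaks normality of `ν_{k+1}`.
-/

theorem properIndex_anti (r n : ℕ) : Antitone (properIndex r n) :=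
  fun _ _ h => Nat.div_le_div_right (Nat.sub_le_sub_left h _)

theorem properIndex_succ (r : ℕ) (k i : Fin r) :
    properIndex r ((k : ℕ) + 1) i = if i ≤ k then 1 else 0 := by
  have hk := k.isLt
  unfold properIndex
  split_ifs with h
  · have : i.val ≤ k.val := h
    exact Nat.div_eq_of_lt_le (by omega) (by omega)
  · have : k.val < i.val := not_le.mp h
    exact Nat.div_eq_of_lt (by omega)

theorem Polynomial.exists_ne_zero_degree_lt_forall_eq_zero {K ι : Type*} [Field K] [Fintype ι]
    (φ : ι → K[X] →ₗ[K] K) {m : ℕ} (hm : Fintype.card ι < m) :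
    ∃ P : K[X], P ≠ 0 ∧ P.degree < m ∧ ∀ i, φ i P = 0 := by
  let Φ : degreeLT K m →ₗ[K] ι → K :=
    LinearMap.pi fun i => φ i ∘ₗ (degreeLT K m).subtype
  have hker : LinearMap.ker Φ ≠ ⊥ := LinearMap.ker_ne_bot_of_finrank_lt <| by
    rwa [(degreeLTEquiv K m).finrank_eq, Module.finrank_fin_fun, Module.finrank_fintype_fun_eq_card]
  obtain ⟨P, hPker, hP0⟩ := Submodule.exists_mem_ne_zero_of_ne_bot hker
  exact ⟨P, by simpa using hP0, mem_degreeLT.mp P.2,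
    fun i => congrFun (LinearMap.mem_ker.mp hPker) i⟩

theorem Finset.forall_eq_zero_iff_forall_sum_Iic_mul_eq_zero {ι R : Type*} [PartialOrder ι]
    [LocallyFiniteOrderBot ι] [WellFoundedLT ι] [Semiring R] [NoZeroDivisors R]
    {s : Set ι} (hs : IsLowerSet s) (α : ι → ι → R) (hα : ∀ i ∈ s, α i i ≠ 0)
    (a : ι → R) :
    (∀ i ∈ s, a i = 0) ↔ ∀ i ∈ s, ∑ j ∈ Iic i, α i j * a j = 0 := by
  refine ⟨fun h i hi => sum_eq_zero fun j hj => ?_, fun h i => ?_⟩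
  · rw [h j (hs (mem_Iic.mp hj) hi), mul_zero]
  induction i using WellFoundedLT.induction with
  | _ i ih =>
    intro hi
    have hsum := h i hi
    rw [Iic_eq_cons_Iio, sum_cons, sum_eq_zero fun j hj => ?_, add_zero] at hsum
    · exact (mul_eq_zero.mp hsum).resolve_left (hα i hi)
    · have hji := mem_Iio.mp hj
      rw [ih j hji (hs hji.le hi), mul_zero]

theorem normalIndex_congr {r n : ℕ} {μ ν : Fin r → (ℂ[X] →ₗ[ℂ] ℂ)}
    (h : ∀ P, TypeIISol r μ n P ↔ TypeIISol r ν n P) :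
    NormalIndex r μ n ↔ NormalIndex r ν n := by
  simp only [NormalIndex, h]

section Triangular

variable {r : ℕ} {μ : Fin r → (ℂ[X] →ₗ[ℂ] ℂ)} {α : Fin r → Fin r → ℂ}

theorem typeIISol_iff_triangular (hα : ∀ j, α j j ≠ 0) (n : ℕ) (P : ℂ[X]) :
    TypeIISol r μ n P ↔ TypeIISol r (fun i => ∑ j ∈ Finset.Iic i, α i j • μ j) n P := by
  refine and_congr_right fun _ => ?_
  simp only [@forall_comm (Fin r) ℕ, LinearMap.sum_apply, LinearMap.smul_apply, smul_eq_mul]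
  exact forall_congr' fun ℓ => Finset.forall_eq_zero_iff_forall_sum_Iic_mul_eq_zero
    (fun i j hji hi => lt_of_lt_of_le hi (properIndex_anti r n hji)) α (fun i _ => hα i) _

theorem not_normalIndex_triangular_of_diag_eq_zero {k : Fin r} (hk : α k k = 0) :
    ¬ NormalIndex r (fun i => ∑ j ∈ Finset.Iic i, α i j • μ j) ((k : ℕ) + 1) := by
  intro hnormal
  obtain ⟨P, hP0, hPdeg, hPμ⟩ := exists_ne_zero_degree_lt_forall_eq_zero
    (fun j : Finset.Iio k => μ j) (m := (k : ℕ) + 1)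
    (by rw [Fintype.card_coe, Fin.card_Iio]; omega)
  have hsol : TypeIISol r (fun i => ∑ j ∈ Finset.Iic i, α i j • μ j) ((k : ℕ) + 1) P := by
    refine ⟨hPdeg.le, fun i ℓ hℓ => ?_⟩
    rw [properIndex_succ] at hℓ
    split_ifs at hℓ with hik
    · obtain rfl : ℓ = 0 := by omega
      rw [pow_zero, one_mul, LinearMap.sum_apply]
      refine Finset.sum_eq_zero fun j hj => ?_
      rw [LinearMap.smul_apply]
      rcases ((Finset.mem_Iic.mp hj).trans hik).lt_or_eq with hjk | rfl
      · rw [hPμ ⟨j, Finset.mem_Iio.mpr hjk⟩, smul_zero]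
      · rw [le_antisymm hik (Finset.mem_Iic.mp hj), hk, zero_smul]
    · exact absurd hℓ (Nat.not_lt_zero ℓ)
  rcases hnormal.1 P hsol with h | h
  · exact hP0 h
  · exact (natDegree_lt_iff_degree_lt hP0).mpr hPdeg |>.ne h

end Triangular

theorem triangular_change_of_measures_general (r : ℕ)
    (μ : Fin r → (Polynomial ℂ →ₗ[ℂ] ℂ)) (hwc : WeaklyComplete r μ)
    (α : Fin r → Fin r → ℂ) :
    (WeaklyComplete r (fun i => ∑ j ∈ Finset.Iic i, α i j • μ j) ↔
      ∀ j : Fin r, α j j ≠ 0) ∧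
    ((∀ j : Fin r, α j j ≠ 0) → ∀ n (P : Polynomial ℂ),
      TypeIISol r μ n P ↔ TypeIISol r (fun i => ∑ j ∈ Finset.Iic i, α i j • μ j) n P) :=
  ⟨⟨fun hσ _ hk => not_normalIndex_triangular_of_diag_eq_zero hk (hσ _),
    fun hα n => (normalIndex_congr (typeIISol_iff_triangular hα n)).mp (hwc n)⟩,
    typeIISol_iff_triangular⟩

/-- invariance under a triangular change of measures: if `μ_1,…,μ_r` is weakly
complete and `σ_i = ∑_{j=1}^{i} α_{i,j} μ_j`, then `σ_1,…,σ_r` is weakly complete iff all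
diagonal coefficients `α_{j,j}` are nonzero, and in that case the type II multiple orthogonal
polynomials (for proper multi-indices) of the two systems coincide. -/
theorem triangular_change_of_measures (r : ℕ) (hr : 0 < r)
    (μ : Fin r → (Polynomial ℂ →ₗ[ℂ] ℂ)) (hwc : WeaklyComplete r μ)
    (α : Fin r → Fin r → ℂ) :
    (WeaklyComplete r (fun i => ∑ j ∈ Finset.Iic i, α i j • μ j) ↔
      ∀ j : Fin r, α j j ≠ 0) ∧
    ((∀ j : Fin r, α j j ≠ 0) → ∀ n (P : Polynomial ℂ),
      TypeIISol r μ n P ↔ TypeIISol r (fun i => ∑ j ∈ Finset.Iic i, α i j • μ j) n P) :=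
  triangular_change_of_measures_general r μ hwc α
end
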